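/- Let L_A be the Lindbladian L_A(X) = -i[H_A, X] + Σ_μ D_{L_μ}(X) and let F, ρ̄ be matrices with L_A(ρ̄) = 0. Then F·L_A(ρ̄ F†) + L_A(F ρ̄)·F† = L_A(F ρ̄ F†) - Σ_μ [L_μ, F] ρ̄ [L_μ, F]†. -/

import Mathlib

/-!
For a map `Φ` built from one-sided multiplications `X ↦ A X` and `X ↦ X B` (the Hamiltonian
commutator and the anticommutator `{L†L, X}`), `F Φ(ρ F†) + Φ(F ρ) F† = Φ(F ρ F†) + F Φ(ρ) F†`
holds exactly. The jump term `X ↦ L X L†` misses this by `-[L, F] ρ [L, F]†`, and stationarity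
of `ρ̄` removes the term `F L_A(ρ̄) F†`.
-/

open Matrix Complex

/-- The Lindbladian with Hamiltonian `H` and jump operators `L μ`. -/
noncomputable def lindbladian16 {n m : ℕ} (H : Matrix (Fin n) (Fin n) ℂ)
    (L : Fin m → Matrix (Fin n) (Fin n) ℂ) (X : Matrix (Fin n) (Fin n) ℂ) :
    Matrix (Fin n) (Fin n) ℂ :=
  (-I) • (H * X - X * H)
    + ∑ μ : Fin m,
        (L μ * X * (L μ)ᴴ - (1 / 2 : ℂ) • ((L μ)ᴴ * L μ * X)
          - (1 / 2 : ℂ) • (X * ((L μ)ᴴ * L μ)))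

noncomputable def dissipator {ι : Type*} [Fintype ι] (L X : Matrix ι ι ℂ) : Matrix ι ι ℂ :=
  L * X * Lᴴ - (1 / 2 : ℂ) • (Lᴴ * L * X) - (1 / 2 : ℂ) • (X * (Lᴴ * L))

lemma lindbladian16_eq_sum_dissipator {n m : ℕ} (H : Matrix (Fin n) (Fin n) ℂ)
    (L : Fin m → Matrix (Fin n) (Fin n) ℂ) (X : Matrix (Fin n) (Fin n) ℂ) :
    lindbladian16 H L X = (-I) • (H * X - X * H) + ∑ μ, dissipator (L μ) X :=
  rfl

lemma commutator_sandwich_add {R : Type*} [Ring R] (H F G ρ : R) :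
    F * (H * (ρ * G) - ρ * G * H) + (H * (F * ρ) - F * ρ * H) * G
      = (H * (F * ρ * G) - F * ρ * G * H) + F * (H * ρ - ρ * H) * G := by
  noncomm_ring

lemma dissipator_sandwich_add {ι : Type*} [Fintype ι] (L F ρ : Matrix ι ι ℂ) :
    F * dissipator L (ρ * Fᴴ) + dissipator L (F * ρ) * Fᴴ
      = dissipator L (F * ρ * Fᴴ) + F * dissipator L ρ * Fᴴ
        - (L * F - F * L) * ρ * (L * F - F * L)ᴴ := by
  simp only [dissipator, conjTranspose_sub, conjTranspose_mul, mul_sub, sub_mul,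
    mul_smul_comm, smul_mul_assoc, mul_assoc]
  abel

lemma lindbladian16_sandwich_add {n m : ℕ} (H : Matrix (Fin n) (Fin n) ℂ)
    (L : Fin m → Matrix (Fin n) (Fin n) ℂ) (F ρ : Matrix (Fin n) (Fin n) ℂ) :
    F * lindbladian16 H L (ρ * Fᴴ) + lindbladian16 H L (F * ρ) * Fᴴ
      = lindbladian16 H L (F * ρ * Fᴴ) + F * lindbladian16 H L ρ * Fᴴ
        - ∑ μ, (L μ * F - F * L μ) * ρ * (L μ * F - F * L μ)ᴴ := by
  calc F * lindbladian16 H L (ρ * Fᴴ) + lindbladian16 H L (F * ρ) * Fᴴ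
      = (-I) • (F * (H * (ρ * Fᴴ) - ρ * Fᴴ * H) + (H * (F * ρ) - F * ρ * H) * Fᴴ)
          + ∑ μ, (F * dissipator (L μ) (ρ * Fᴴ) + dissipator (L μ) (F * ρ) * Fᴴ) := by
        simp only [lindbladian16_eq_sum_dissipator, mul_add, add_mul, smul_add,
          Finset.mul_sum, Finset.sum_mul, Finset.sum_add_distrib, mul_smul_comm, smul_mul_assoc]
        abel
    _ = (-I) • ((H * (F * ρ * Fᴴ) - F * ρ * Fᴴ * H) + F * (H * ρ - ρ * H) * Fᴴ)
          + ∑ μ, (dissipator (L μ) (F * ρ * Fᴴ) + F * dissipator (L μ) ρ * Fᴴ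
            - (L μ * F - F * L μ) * ρ * (L μ * F - F * L μ)ᴴ) := by
        simp only [commutator_sandwich_add, dissipator_sandwich_add]
    _ = _ := by
        simp only [lindbladian16_eq_sum_dissipator, mul_add, add_mul, smul_add,
          Finset.mul_sum, Finset.sum_mul, Finset.sum_add_distrib, Finset.sum_sub_distrib,
          mul_smul_comm, smul_mul_assoc]
        abel

theorem stmt_16_general (n m : ℕ)
    (HA : Matrix (Fin n) (Fin n) ℂ)
    (L : Fin m → Matrix (Fin n) (Fin n) ℂ)
    (F ρbar : Matrix (Fin n) (Fin n) ℂ)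
    (hss : lindbladian16 HA L ρbar = 0) :
    F * lindbladian16 HA L (ρbar * Fᴴ) + lindbladian16 HA L (F * ρbar) * Fᴴ
      = lindbladian16 HA L (F * ρbar * Fᴴ)
        - ∑ μ : Fin m, (L μ * F - F * L μ) * ρbar * (L μ * F - F * L μ)ᴴ := by
  rw [lindbladian16_sandwich_add, hss, mul_zero, zero_mul, add_zero]

/-- If `L_A(ρ̄) = 0`, then
`F L_A(ρ̄ Fᴴ) + L_A(F ρ̄) Fᴴ = L_A(F ρ̄ Fᴴ) - Σ_μ [L_μ, F] ρ̄ [L_μ, F]ᴴ`. -/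
theorem stmt_16 (n m : ℕ)
    (HA : Matrix (Fin n) (Fin n) ℂ) (hHA : HA.IsHermitian)
    (L : Fin m → Matrix (Fin n) (Fin n) ℂ)
    (F ρbar : Matrix (Fin n) (Fin n) ℂ)
    (hss : lindbladian16 HA L ρbar = 0) :
    F * lindbladian16 HA L (ρbar * Fᴴ) + lindbladian16 HA L (F * ρbar) * Fᴴ
      = lindbladian16 HA L (F * ρbar * Fᴴ)
        - ∑ μ : Fin m, (L μ * F - F * L μ) * ρbar * (L μ * F - F * L μ)ᴴ :=
  stmt_16_general n m HA L F ρbar hss
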